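/- For 0 < α < π, the map φ[α] on M₃(ℂ) is indecomposable: there exists a matrix X ∈ M₃(M₃) such that both X and its partial transpose are positive semidefinite, but (id ⊗ φ[α])(X) is not positive semidefinite. -/

import Mathlib

open ComplexOrder

noncomputable def lam15 (α : ℝ) : ℝ := (2 / 3) * (1 + Real.cos α)
noncomputable def mu15 (α : ℝ) : ℝ := (2 / 3) * (1 - (1 / 2) * Real.cos α - (Real.sqrt 3 / 2) * Real.sin α)
noncomputable def nu15 (α : ℝ) : ℝ := (2 / 3) * (1 - (1 / 2) * Real.cos α + (Real.sqrt 3 / 2) * Real.sin α)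

/-- The map `φ[α]` on `M₃(ℂ)`. -/
noncomputable def phiAlpha15 (α : ℝ) (a : Matrix (Fin 3) (Fin 3) ℂ) : Matrix (Fin 3) (Fin 3) ℂ :=
  Matrix.of fun i j =>
    if i = j then
      (1 / 2 : ℂ) * ((![![lam15 α, mu15 α, nu15 α], ![nu15 α, lam15 α, mu15 α], ![mu15 α, nu15 α, lam15 α]] i 0 : ℝ) * a 0 0
        + (![![lam15 α, mu15 α, nu15 α], ![nu15 α, lam15 α, mu15 α], ![mu15 α, nu15 α, lam15 α]] i 1 : ℝ) * a 1 1
        + (![![lam15 α, mu15 α, nu15 α], ![nu15 α, lam15 α, mu15 α], ![mu15 α, nu15 α, lam15 α]] i 2 : ℝ) * a 2 2)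
    else -(1 / 2 : ℂ) * a i j

/-- `(id ⊗ φ)(X)`: apply `φ` to each `3×3` block of a `9×9` matrix. -/
noncomputable def idTensor (φ : Matrix (Fin 3) (Fin 3) ℂ → Matrix (Fin 3) (Fin 3) ℂ)
    (X : Matrix (Fin 3 × Fin 3) (Fin 3 × Fin 3) ℂ) : Matrix (Fin 3 × Fin 3) (Fin 3 × Fin 3) ℂ :=
  Matrix.of fun a b => φ (Matrix.of fun k l => X (a.1, k) (b.1, l)) a.2 b.2

/-!
Write `ω = ∑ᵢ eᵢ ⊗ eᵢ` and let `Dₚ` be diagonal with entry `p` at `(i, i + 1)`, `p⁻¹` at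
`(i, i + 2)` and `0` at `(i, i)`. The witness `X(p) = ω ω* + Dₚ` is clearly positive. Its partial
transpose is `F + Dₚ` with `F` the flip `eᵢ ⊗ eⱼ ↦ eⱼ ⊗ eᵢ`; this splits into the `1 × 1` blocks
`1` on `eᵢ ⊗ eᵢ` and the rank-one `2 × 2` blocks `[[p, 1], [1, p⁻¹]]` on
`{eᵢ ⊗ eᵢ₊₁, eᵢ₊₁ ⊗ eᵢ}`, so it is positive too. Finally
`⟨ω, (id ⊗ φ[α]) X(p) ω⟩ = 3/2 (λ + μ p + ν p⁻¹ - 2)`, and as `λ + μ + ν = 2` with `0 ≤ μ < ν`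
for `0 < α < π`, a suitable `p` makes this negative.
-/

open Matrix

noncomputable def maxEntangled : Fin 3 × Fin 3 → ℂ := fun a => if a.2 = a.1 then 1 else 0

noncomputable def diagCorrection (p : ℝ) (a : Fin 3 × Fin 3) : ℂ :=
  if a.2 = a.1 + 1 then (p : ℂ) else if a.2 = a.1 + 2 then (p : ℂ)⁻¹ else 0

noncomputable def witness (p : ℝ) : Matrix (Fin 3 × Fin 3) (Fin 3 × Fin 3) ℂ :=
  vecMulVec maxEntangled (star maxEntangled) + diagonal (diagCorrection p)

def flipMatrix : Matrix (Fin 3 × Fin 3) (Fin 3 × Fin 3) ℂ :=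
  of fun a b => if b = a.swap then 1 else 0

def partialTranspose {ι κ R : Type*} (X : Matrix (ι × κ) (ι × κ) R) : Matrix (ι × κ) (ι × κ) R :=
  of fun a b => X (b.1, a.2) (a.1, b.2)

lemma diagCorrection_nonneg {p : ℝ} (hp : 0 ≤ p) (a : Fin 3 × Fin 3) : 0 ≤ diagCorrection p a := by
  unfold diagCorrection
  split_ifs
  · exact Complex.zero_le_real.mpr hp
  · rw [← Complex.ofReal_inv]; exact Complex.zero_le_real.mpr (inv_nonneg.mpr hp)
  · exact le_rfl

lemma posSemidef_witness {p : ℝ} (hp : 0 ≤ p) : (witness p).PosSemidef :=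
  (posSemidef_vecMulVec_self_star _).add (posSemidef_diagonal_iff.mpr (diagCorrection_nonneg hp))

lemma partialTranspose_witness (p : ℝ) :
    partialTranspose (witness p) =
      flipMatrix + diagonal (diagCorrection p) := by
  ext ⟨i, k⟩ ⟨j, l⟩
  simp only [partialTranspose, witness, flipMatrix, maxEntangled, of_apply, Matrix.add_apply,
    vecMulVec_apply, Pi.star_apply, apply_ite star, star_one, star_zero, diagonal_apply,
    Prod.swap_prod_mk, Prod.mk.injEq]
  split_ifs <;> grind

noncomputable def ptFactor (r : ℝ) : Matrix (Fin 3 × Fin 3) (Fin 3 × Fin 3) ℂ :=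
  of fun a b =>
    if a.2 = a.1 then (if b = a then 1 else 0)
    else if a.2 = a.1 + 1 then (if b = a then (r : ℂ) else if b = a.swap then (r : ℂ)⁻¹ else 0)
    else 0

lemma flipMatrix_add_diagonal_diagCorrection_sq {r : ℝ} (hr : r ≠ 0) :
    flipMatrix + diagonal (diagCorrection (r ^ 2)) =
      (ptFactor r)ᴴ * ptFactor r := by
  have hr' : (r : ℂ) ≠ 0 := by exact_mod_cast hr
  ext ⟨i, k⟩ ⟨j, l⟩
  fin_cases i <;> fin_cases k <;> fin_cases j <;> fin_cases l <;>
    simp [flipMatrix, ptFactor, diagCorrection, mul_apply, Fintype.sum_prod_type, Fin.sum_univ_three,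
      Prod.ext_iff, hr', sq]

lemma posSemidef_partialTranspose_witness {p : ℝ} (hp : 0 < p) :
    (partialTranspose (witness p)).PosSemidef := by
  have hr : Real.sqrt p ≠ 0 := (Real.sqrt_pos.mpr hp).ne'
  rw [partialTranspose_witness, ← Real.sq_sqrt hp.le, flipMatrix_add_diagonal_diagCorrection_sq hr]
  exact posSemidef_conjTranspose_mul_self _

lemma star_maxEntangled_dotProduct_idTensor_mulVec
    (φ : Matrix (Fin 3) (Fin 3) ℂ → Matrix (Fin 3) (Fin 3) ℂ)
    (X : Matrix (Fin 3 × Fin 3) (Fin 3 × Fin 3) ℂ) :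
    star maxEntangled ⬝ᵥ idTensor φ X *ᵥ maxEntangled =
      ∑ i, ∑ j, φ (of fun k l => X (i, k) (j, l)) i j := by
  simp [dotProduct, mulVec, maxEntangled, idTensor, Fintype.sum_prod_type]

lemma sum_phiAlpha15_witness (α p : ℝ) :
    ∑ i, ∑ j, phiAlpha15 α (of fun k l => witness p (i, k) (j, l)) i j =
      ((3 / 2 * (lam15 α + mu15 α * p + nu15 α * p⁻¹ - 2) : ℝ) : ℂ) := by
  simp [Fin.sum_univ_three, phiAlpha15, witness, maxEntangled, diagCorrection, vecMulVec_apply,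
    diagonal_apply]
  ring

lemma lam15_add_mu15_add_nu15 (α : ℝ) : lam15 α + mu15 α + nu15 α = 2 := by
  unfold lam15 mu15 nu15; ring

lemma mu15_eq_one_sub_cos (α : ℝ) : mu15 α = 2 / 3 * (1 - Real.cos (α - Real.pi / 3)) := by
  rw [mu15, Real.cos_sub, Real.cos_pi_div_three, Real.sin_pi_div_three]; ring

lemma mu15_nonneg (α : ℝ) : 0 ≤ mu15 α := by
  rw [mu15_eq_one_sub_cos]; nlinarith [Real.cos_le_one (α - Real.pi / 3)]

lemma mu15_lt_nu15 {α : ℝ} (h : 0 < Real.sin α) : mu15 α < nu15 α := by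
  have h3 : 0 < Real.sqrt 3 := by positivity
  unfold mu15 nu15; nlinarith

/-- `μ p + ν / p - μ - ν = (p - 1)(μ - ν / p)`, which is negative for `p = 2ν / (μ + ν)`. -/
lemma exists_mul_add_mul_inv_lt {μ ν : ℝ} (hμ : 0 ≤ μ) (hμν : μ < ν) :
    ∃ p > 0, μ * p + ν * p⁻¹ < μ + ν := by
  have hν : 0 < ν := by linarith
  have hs : 0 < μ + ν := by linarith
  refine ⟨2 * ν / (μ + ν), by positivity, ?_⟩
  rw [inv_div]
  field_simp
  nlinarith [mul_pos (sub_pos.mpr hμν) (sub_pos.mpr hμν)]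

/-- For `0 < α < π`, the map `φ[α]` is indecomposable: there is an `X ∈ M₃(M₃)` with `X` and
its partial transpose positive semidefinite, yet `(id ⊗ φ[α])(X)` not positive semidefinite. -/
theorem stmt_15 (α : ℝ) (h0 : 0 < α) (hπ : α < Real.pi) :
    ∃ X : Matrix (Fin 3 × Fin 3) (Fin 3 × Fin 3) ℂ,
      X.PosSemidef ∧
      (Matrix.of fun a b : Fin 3 × Fin 3 => X (b.1, a.2) (a.1, b.2)).PosSemidef ∧
      ¬ (idTensor (phiAlpha15 α) X).PosSemidef := by
  obtain ⟨p, hp, hlt⟩ := exists_mul_add_mul_inv_lt (mu15_nonneg α)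
    (mu15_lt_nu15 (Real.sin_pos_of_pos_of_lt_pi h0 hπ))
  refine ⟨witness p, posSemidef_witness hp.le, posSemidef_partialTranspose_witness hp, ?_⟩
  intro h
  have hw := h.dotProduct_mulVec_nonneg maxEntangled
  rw [star_maxEntangled_dotProduct_idTensor_mulVec, sum_phiAlpha15_witness,
    Complex.zero_le_real] at hw
  linarith [lam15_add_mu15_add_nu15 α]
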